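/- If U ⊆ ℕ is a consistent set, then G(U) is consistent. -/

import Mathlib

/-- Sentences of the augmented language 𝓛. -/
inductive Sent (B : Type) : Type where
  | base : B → Sent B
  | Tr : ℕ → Sent B
  | exT : Sent B
  | allT : Sent B
  | neg : Sent B → Sent B
  | or : Sent B → Sent B → Sent B
  | and : Sent B → Sent B → Sent B
  | imp : Sent B → Sent B → Sent B
  | iff : Sent B → Sent B → Sent B

variable {B : Type}

mutual
/-- `isTrue gn v U A` means `#A ∈ G(U)` according to rules (r1)–(r9). -/
def isTrue (gn : Sent B → ℕ) (v : B → Bool) (U : Set ℕ) : Sent B → Prop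
  | .base b => v b = true
  | .Tr n => ∃ A : Sent B, n = gn A ∧ gn A ∈ U
  | .exT => ∃ n : ℕ, ∃ A : Sent B, n = gn A ∧ gn A ∈ U
  | .allT => ∀ n : ℕ, ∃ A : Sent B, n = gn A ∧ gn A ∈ U
  | .neg A => isFalse gn v U A
  | .or A C => isTrue gn v U A ∨ isTrue gn v U C
  | .and A C => isTrue gn v U A ∧ isTrue gn v U C
  | .imp A C => isFalse gn v U A ∨ isTrue gn v U C
  | .iff A C => (isTrue gn v U A ∧ isTrue gn v U C) ∨ (isFalse gn v U A ∧ isFalse gn v U C)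

/-- `isFalse gn v U A` means `#A ∈ F(U)` according to rules (r1)–(r9). -/
def isFalse (gn : Sent B → ℕ) (v : B → Bool) (U : Set ℕ) : Sent B → Prop
  | .base b => v b = false
  | .Tr n => ∃ A : Sent B, n = gn A ∧ gn (.neg A) ∈ U
  | .exT => ∀ n : ℕ, ∃ A : Sent B, n = gn A ∧ gn (.neg A) ∈ U
  | .allT => ∃ n : ℕ, ∃ A : Sent B, n = gn A ∧ gn (.neg A) ∈ U
  | .neg A => isTrue gn v U A
  | .or A C => isFalse gn v U A ∧ isFalse gn v U C
  | .and A C => isFalse gn v U A ∨ isFalse gn v U C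
  | .imp A C => isTrue gn v U A ∧ isFalse gn v U C
  | .iff A C => (isTrue gn v U A ∧ isFalse gn v U C) ∨ (isFalse gn v U A ∧ isTrue gn v U C)
end

/-- `G U`: Gödel numbers of sentences declared true over `U`. -/
def GSet (gn : Sent B → ℕ) (v : B → Bool) (U : Set ℕ) : Set ℕ :=
  { n | ∃ A : Sent B, n = gn A ∧ isTrue gn v U A }

/-- `F U`: Gödel numbers of sentences declared false over `U`. -/
def FSet (gn : Sent B → ℕ) (v : B → Bool) (U : Set ℕ) : Set ℕ :=
  { n | ∃ A : Sent B, n = gn A ∧ isFalse gn v U A }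

/-- `U` is consistent: no sentence has both itself and its negation in `U`. -/
def Consistent (gn : Sent B → ℕ) (U : Set ℕ) : Prop :=
  ¬ ∃ A : Sent B, gn A ∈ U ∧ gn (.neg A) ∈ U

/-! The truth and falsity conditions of a consistent `U` never overlap: for `T(n)` an overlap
would put both `#A` and `#¬A` into `U` (with `n = #A`, by injectivity of `#`), the quantified
atoms reduce to instances of `T(n)`, and the connectives follow by induction.
Since `#¬A ∈ G(U)` just says `#A ∈ F(U)`, consistency of `G(U)` follows. -/

section Disjoint

variable {gn : Sent B → ℕ} {v : B → Bool} {U : Set ℕ}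

theorem mem_GSet_iff (hgn : Function.Injective gn) {A : Sent B} :
    gn A ∈ GSet gn v U ↔ isTrue gn v U A :=
  ⟨fun ⟨_, he, hA⟩ => hgn he ▸ hA, fun hA => ⟨A, rfl, hA⟩⟩

theorem Consistent.not_isFalse_Tr_of_isTrue_Tr (hgn : Function.Injective gn)
    (hU : Consistent gn U) (n : ℕ) :
    isTrue gn v U (.Tr n) → ¬ isFalse gn v U (.Tr n) := by
  rintro ⟨A, rfl, hA⟩ ⟨A', he, hA'⟩
  exact hU ⟨A, hA, hgn he ▸ hA'⟩

theorem Consistent.not_isFalse_of_isTrue (hgn : Function.Injective gn)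
    (hU : Consistent gn U) (A : Sent B) : isTrue gn v U A → ¬ isFalse gn v U A := by
  have hTr := hU.not_isFalse_Tr_of_isTrue_Tr (v := v) hgn
  induction A with
  | base b => intro (hT : v b = true) (hF : v b = false); simp [hT] at hF
  | Tr n => exact hTr n
  | exT => rintro ⟨n, hT⟩ hF; exact hTr n hT (hF n)
  | allT => rintro hT ⟨n, hF⟩; exact hTr n (hT n) hF
  | neg A ih => exact fun hT hF => ih hF hT
  | or A C ihA ihC =>
    rintro (hA | hC) ⟨hA', hC'⟩
    exacts [ihA hA hA', ihC hC hC']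
  | and A C ihA ihC =>
    rintro ⟨hA, hC⟩ (hA' | hC')
    exacts [ihA hA hA', ihC hC hC']
  | imp A C ihA ihC =>
    rintro (hA' | hC) ⟨hA, hC'⟩
    exacts [ihA hA hA', ihC hC hC']
  | iff A C ihA ihC =>
    rintro (⟨hA, hC⟩ | ⟨hA', hC'⟩) (⟨hA₁, hC₁'⟩ | ⟨hA₁', hC₁⟩)
    exacts [ihC hC hC₁', ihA hA hA₁', ihA hA₁ hA', ihC hC₁ hC']

end Disjoint

/-- If `U ⊆ ℕ` is consistent, then `G(U)` is consistent. -/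
theorem stmt_0 {B : Type} (gn : Sent B → ℕ) (hgn : Function.Injective gn)
    (v : B → Bool) (U : Set ℕ) (hU : Consistent gn U) :
    Consistent gn (GSet gn v U) := by
  rintro ⟨A, hA, hnA⟩
  rw [mem_GSet_iff hgn] at hA hnA
  exact hU.not_isFalse_of_isTrue hgn A hA hnA
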